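/- For Λ > 0, 1 < p < 3, R_Λ = √(3/Λ), and u(r) = ∫_r^{R_Λ} ρ^{-2/(p-1)} (1 - (Λ/3)ρ²)^{-1/2} dρ, the function A(r) = (u(r)/(p-1)) · √(1 - (Λ/3)r²) · r^{(3-p)/(p-1)} satisfies lim_{r→0⁺} A(r) = 1/(3-p). -/

import Mathlib

open Real Filter MeasureTheory

/-- The radial profile of the model `p`-Green's function. -/
noncomputable def uModel (Λ p r : ℝ) : ℝ :=
  ∫ ρ in r..Real.sqrt (3 / Λ), ρ ^ (-(2 / (p - 1))) / Real.sqrt (1 - Λ / 3 * ρ ^ 2)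

/-- The quantity `A(r) = H/(2|∇w|)` of the model. -/
noncomputable def AModel (Λ p r : ℝ) : ℝ :=
  uModel Λ p r / (p - 1) * Real.sqrt (1 - Λ / 3 * r ^ 2) * r ^ ((3 - p) / (p - 1))

/-!
With `α = (3 - p)/(p - 1)` the integrand of `u` is `ρ^(-(α+1)) w(ρ)` where
`w(ρ) = (1 - (Λ/3)ρ²)^(-1/2)` tends to `1` at `0⁺` and is integrable up to `R_Λ`
(it is the derivative of `R_Λ arcsin (ρ / R_Λ)`). The unweighted integral gives
`r^α ∫_r^R ρ^(-(α+1)) dρ → 1/α` explicitly, and the weight error `w - 1` contributes at most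
`sup_(0,c] |w - 1| / α` plus a tail of order `r^α`. Hence `r^α u(r) → 1/α = (p-1)/(3-p)`,
while the remaining factor `√(1 - (Λ/3)r²)/(p-1)` tends to `1/(p-1)`.
-/

open Set Topology intervalIntegral

lemma tendsto_rpow_nhdsGT_zero {α : ℝ} (hα : 0 < α) :
    Tendsto (fun r : ℝ => r ^ α) (𝓝[>] 0) (𝓝 0) := by
  have h := (Real.continuousAt_rpow_const 0 α (Or.inr hα.le)).tendsto
  rw [Real.zero_rpow hα.ne'] at h
  exact h.mono_left nhdsWithin_le_nhds

lemma intervalIntegrable_inv_sqrt_one_sub_sq :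
    IntervalIntegrable (fun x : ℝ => (√(1 - x ^ 2))⁻¹) volume 0 1 := by
  refine intervalIntegrable_deriv_of_nonneg continuous_arcsin.continuousOn
    (fun x hx => ?_) (fun x _ => by positivity)
  simp only [zero_le_one, min_eq_left, max_eq_right, mem_Ioo] at hx
  simpa only [one_div] using hasDerivAt_arcsin (by linarith) hx.2.ne

lemma intervalIntegrable_inv_sqrt_one_sub_mul_sq {k R : ℝ} (hkR : k * R ^ 2 = 1) :
    IntervalIntegrable (fun ρ : ℝ => (√(1 - k * ρ ^ 2))⁻¹) volume 0 R := by
  have h := intervalIntegrable_inv_sqrt_one_sub_sq.comp_mul_left (c := R⁻¹)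
  rw [zero_div, one_div, inv_inv] at h
  convert h using 5 with ρ
  rw [mul_pow, inv_pow, eq_inv_of_mul_eq_one_left hkR]

section PowerWeight

variable {α : ℝ}

lemma rpow_mul_integral_rpow_neg_add_one (hα : 0 < α) {r c : ℝ} (hr : 0 < r) (hc : 0 < c) :
    r ^ α * ∫ ρ in r..c, ρ ^ (-(α + 1)) = (1 - r ^ α * c ^ (-α)) / α := by
  have hexp : -(α + 1) + 1 = -α := by ring
  rw [integral_rpow (Or.inr ⟨by linarith, notMem_uIcc_of_lt hr hc⟩), hexp, Real.rpow_neg hr.le]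
  have : r ^ α ≠ 0 := (Real.rpow_pos_of_pos hr α).ne'
  field_simp
  ring

lemma tendsto_rpow_mul_integral_rpow_neg_add_one (hα : 0 < α) {R : ℝ} (hR : 0 < R) :
    Tendsto (fun r => r ^ α * ∫ ρ in r..R, ρ ^ (-(α + 1))) (𝓝[>] 0) (𝓝 (1 / α)) := by
  have hlim := (((tendsto_rpow_nhdsGT_zero hα).mul_const (R ^ (-α))).const_sub 1).div_const α
  rw [zero_mul, sub_zero] at hlim
  refine hlim.congr' ?_
  filter_upwards [self_mem_nhdsWithin] with r hr
  exact (rpow_mul_integral_rpow_neg_add_one hα hr hR).symm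

lemma abs_rpow_mul_integral_rpow_neg_add_one_mul_le (hα : 0 < α) {r c K : ℝ} (hr : 0 < r)
    (hrc : r < c) {v : ℝ → ℝ} (hv : ∀ ρ ∈ Ioc r c, |v ρ| ≤ K) :
    |r ^ α * ∫ ρ in r..c, ρ ^ (-(α + 1)) * v ρ| ≤ K / α := by
  have hc : 0 < c := hr.trans hrc
  have hK : 0 ≤ K := (abs_nonneg _).trans (hv c ⟨hrc, le_rfl⟩)
  have hrα : 0 < r ^ α := Real.rpow_pos_of_pos hr α
  have hbound : ‖∫ ρ in r..c, ρ ^ (-(α + 1)) * v ρ‖ ≤ ∫ ρ in r..c, ρ ^ (-(α + 1)) * K := by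
    refine norm_integral_le_of_norm_le hrc.le (ae_of_all _ fun ρ hρ => ?_)
      ((intervalIntegrable_rpow (Or.inr (notMem_uIcc_of_lt hr hc))).mul_const K)
    have hρ : 0 < ρ := hr.trans hρ.1
    rw [norm_mul, Real.norm_of_nonneg (Real.rpow_pos_of_pos hρ _).le]
    exact mul_le_mul_of_nonneg_left (hv ρ ‹_›) (Real.rpow_pos_of_pos hρ _).le
  calc |r ^ α * ∫ ρ in r..c, ρ ^ (-(α + 1)) * v ρ|
      = r ^ α * ‖∫ ρ in r..c, ρ ^ (-(α + 1)) * v ρ‖ := by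
        rw [abs_mul, abs_of_pos hrα, Real.norm_eq_abs]
    _ ≤ r ^ α * ∫ ρ in r..c, ρ ^ (-(α + 1)) * K := by gcongr
    _ = (1 - r ^ α * c ^ (-α)) / α * K := by
        rw [intervalIntegral.integral_mul_const, ← mul_assoc,
          rpow_mul_integral_rpow_neg_add_one hα hr hc]
    _ ≤ K / α := by
        have : 0 ≤ r ^ α * c ^ (-α) := by positivity
        rw [div_mul_eq_mul_div]
        gcongr
        nlinarith

lemma IntervalIntegrable.rpow_mul_of_pos {v : ℝ → ℝ} {R : ℝ}
    (hv : IntervalIntegrable v volume 0 R) {a b : ℝ} (ha : 0 < a) (hb : 0 < b) (haR : a ≤ R)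
    (hbR : b ≤ R) (s : ℝ) :
    IntervalIntegrable (fun ρ => ρ ^ s * v ρ) volume a b := by
  have hR : 0 ≤ R := ha.le.trans haR
  refine (hv.mono_set (uIcc_subset_uIcc ?_ ?_)).continuousOn_mul
    (ContinuousOn.rpow_const continuousOn_id fun ρ hρ => Or.inl ?_)
  · rw [uIcc_of_le hR]; exact ⟨ha.le, haR⟩
  · rw [uIcc_of_le hR]; exact ⟨hb.le, hbR⟩
  · exact ne_of_mem_of_not_mem hρ (notMem_uIcc_of_lt ha hb)

lemma tendsto_rpow_mul_integral_rpow_neg_add_one_mul_of_tendsto_zero (hα : 0 < α) {R : ℝ}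
    (hR : 0 < R) {v : ℝ → ℝ} (hv : Tendsto v (𝓝[>] 0) (𝓝 0))
    (hvint : IntervalIntegrable v volume 0 R) :
    Tendsto (fun r => r ^ α * ∫ ρ in r..R, ρ ^ (-(α + 1)) * v ρ) (𝓝[>] 0) (𝓝 0) := by
  rw [Metric.tendsto_nhds]
  intro ε hε
  obtain ⟨c₀, hc₀, hvc₀⟩ := mem_nhdsGT_iff_exists_Ioc_subset.1
    (hv (Metric.closedBall_mem_nhds 0 (half_pos (mul_pos hε hα))))
  set c := min c₀ R
  have hc : 0 < c := lt_min hc₀ hR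
  have hvc : ∀ ρ ∈ Ioc 0 c, |v ρ| ≤ ε * α / 2 := fun ρ hρ => by
    simpa [Real.dist_eq] using hvc₀ ⟨hρ.1, hρ.2.trans (min_le_left _ _)⟩
  have htail := ((tendsto_rpow_nhdsGT_zero hα).mul_const
    (∫ ρ in c..R, ρ ^ (-(α + 1)) * v ρ)).eventually (Metric.ball_mem_nhds _ (half_pos hε))
  rw [zero_mul] at htail
  filter_upwards [Ioo_mem_nhdsGT hc, htail] with r hr hrtail
  have hsplit := integral_add_adjacent_intervals
    (hvint.rpow_mul_of_pos hr.1 hc (hr.2.le.trans (min_le_right _ _)) (min_le_right _ _)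
      (-(α + 1)))
    (hvint.rpow_mul_of_pos hc hR (min_le_right _ _) le_rfl (-(α + 1)))
  have hhead := abs_rpow_mul_integral_rpow_neg_add_one_mul_le hα hr.1 hr.2
    (fun ρ hρ => hvc ρ ⟨hr.1.trans hρ.1, hρ.2⟩)
  rw [Real.dist_eq, sub_zero] at hrtail
  rw [Real.dist_eq, sub_zero, ← hsplit, mul_add]
  calc _ ≤ _ := abs_add_le _ _
    _ < ε * α / 2 / α + ε / 2 := add_lt_add_of_le_of_lt hhead hrtail
    _ = ε := by field_simp; ring

lemma tendsto_rpow_mul_integral_rpow_neg_add_one_mul (hα : 0 < α) {R : ℝ} (hR : 0 < R)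
    {w : ℝ → ℝ} (hw : Tendsto w (𝓝[>] 0) (𝓝 1)) (hwint : IntervalIntegrable w volume 0 R) :
    Tendsto (fun r => r ^ α * ∫ ρ in r..R, ρ ^ (-(α + 1)) * w ρ) (𝓝[>] 0) (𝓝 (1 / α)) := by
  have hvint : IntervalIntegrable (fun ρ => w ρ - 1) volume 0 R :=
    hwint.sub intervalIntegrable_const
  have hlim := (tendsto_rpow_mul_integral_rpow_neg_add_one hα hR).add
    (tendsto_rpow_mul_integral_rpow_neg_add_one_mul_of_tendsto_zero hα hR
      (by simpa using hw.sub_const 1) hvint)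
  rw [add_zero] at hlim
  refine hlim.congr' ?_
  filter_upwards [Ioo_mem_nhdsGT hR] with r hr
  rw [← mul_add, ← integral_add
    (intervalIntegrable_rpow (Or.inr (notMem_uIcc_of_lt hr.1 hR)))
    (hvint.rpow_mul_of_pos hr.1 hR hr.2.le le_rfl _)]
  simp only [mul_sub, mul_one, add_sub_cancel]

end PowerWeight

theorem stmt_1 (Λ p : ℝ) (hΛ : 0 < Λ) (hp1 : 1 < p) (hp3 : p < 3) :
    Tendsto (fun r : ℝ => AModel Λ p r) (nhdsWithin 0 (Set.Ioi 0))
      (nhds (1 / (3 - p))) := by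
  set R := √(3 / Λ) with hR_def
  set α := (3 - p) / (p - 1) with hα_def
  have hp : p - 1 ≠ 0 := by linarith
  have hα : 0 < α := div_pos (by linarith) (by linarith)
  have hR : 0 < R := Real.sqrt_pos.2 (by positivity)
  have hΛR : Λ / 3 * R ^ 2 = 1 := by
    rw [Real.sq_sqrt (by positivity)]; field_simp
  have hsqrt : Tendsto (fun r : ℝ => √(1 - Λ / 3 * r ^ 2)) (𝓝[>] 0) (𝓝 1) := by
    have h := ((by fun_prop : Continuous fun r : ℝ => √(1 - Λ / 3 * r ^ 2)).tendsto 0)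
    simpa using h.mono_left nhdsWithin_le_nhds
  have hu (r : ℝ) : uModel Λ p r = ∫ ρ in r..R, ρ ^ (-(α + 1)) * (√(1 - Λ / 3 * ρ ^ 2))⁻¹ := by
    have hexp : 2 / (p - 1) = α + 1 := by rw [hα_def]; field_simp; ring
    simp only [uModel, hexp, ← hR_def, ← div_eq_mul_inv]
  have hlim := ((tendsto_rpow_mul_integral_rpow_neg_add_one_mul hα hR
    (by simpa using hsqrt.inv₀ one_ne_zero)
    (intervalIntegrable_inv_sqrt_one_sub_mul_sq hΛR)).mul hsqrt).div_const (p - 1)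
  have hlimit : 1 / α * 1 / (p - 1) = 1 / (3 - p) := by
    rw [hα_def]; field_simp
  rw [hlimit] at hlim
  refine hlim.congr fun r => ?_
  rw [AModel, hu]
  ring
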